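/- Let N ≥ 1, let r_1,...,r_N be reals with 0 ≤ r_1 ≤ r_2 ≤ ... ≤ r_N, and let y_1,...,y_N be arbitrary reals. Then the ultradiscrete permanent of the N×N matrix whose (j,m) entry (m = 1,...,N) is |y_j + (−N−1+2m)·r_j| equals [max over (ρ_1,...,ρ_N) ∈ {−1,1}^N of (Σ_{j=1}^N ρ_j·y_j − Σ_{1≤j<j'≤N} ρ_j·ρ_{j'}·r_j)] + Σ_{1≤j<j'≤N} r_{j'}. -/

import Mathlib

open Finset

/-- The ultradiscrete permanent of an `N × N` real matrix:
the maximum over all permutations `π` of `Σ_j a j (π j)`. -/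
noncomputable def uperm (N : ℕ) (a : Fin N → Fin N → ℝ) : ℝ :=
  Finset.univ.sup' Finset.univ_nonempty fun π : Equiv.Perm (Fin N) => ∑ j, a j (π j)

/-!
Write `c m = 2m - N + 1` for `m = 0, …, N - 1`, the centred position of `m`. Since
`|x| = max_{ε = ±1} ε x`, the permanent is `max_ρ max_π Σ_j ρ_j (y_j + c(π j) r_j)`,
and the inner maximum over `π` of `Σ_j t_j c(π j)` with `t_j = ρ_j r_j` is
`Σ_{j < j'} |t_j - t_j'|` (rearrangement: `Σ_m u_m c_m = Σ_{m < m'} (u_m' - u_m)`, which is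
largest when `u` is sorted). For `0 ≤ r_j ≤ r_j'` one has
`|ρ_j r_j - ρ_j' r_j'| = r_j' - ρ_j ρ_j' r_j`, which gives the formula.
-/

open Equiv

noncomputable section

def boolSign (b : Bool) : ℝ := if b then 1 else -1

def centeredIndex (N : ℕ) (m : Fin N) : ℝ := 2 * (m : ℕ) - N + 1

def pairSum {ι : Type*} [Fintype ι] [LinearOrder ι] (f : ι → ι → ℝ) : ℝ :=
  ∑ j, ∑ j', if j < j' then f j j' else 0

end

theorem abs_boolSign_mul_sub_boolSign_mul (b b' : Bool) {a a' : ℝ} (ha : 0 ≤ a) (h : a ≤ a') :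
    |boolSign b * a - boolSign b' * a'| = a' - boolSign b * boolSign b' * a := by
  cases b <;> cases b' <;> simp only [boolSign, Bool.false_eq_true, ite_true, ite_false]
  · rw [abs_of_nonneg (by linarith)]; ring
  · rw [abs_of_nonpos (by linarith)]; ring
  · rw [abs_of_nonneg (by linarith)]; ring
  · rw [abs_of_nonpos (by linarith)]; ring

theorem sum_abs_eq_sup'_boolSign {ι : Type*} [Fintype ι] [DecidableEq ι] (x : ι → ℝ) :
    ∑ i, |x i| = univ.sup' univ_nonempty fun ρ : ι → Bool => ∑ i, boolSign (ρ i) * x i := by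
  refine le_antisymm ?_ (sup'_le _ _ fun ρ _ => sum_le_sum fun i _ => ?_)
  · refine le_sup'_of_le _ (mem_univ fun i => decide (0 ≤ x i)) (sum_le_sum fun i _ => ?_)
    by_cases hx : 0 ≤ x i
    · simp [boolSign, hx, abs_of_nonneg hx]
    · simp [boolSign, hx, abs_of_neg (not_le.1 hx)]
  · cases ρ i
    · simpa [boolSign] using neg_le_abs (x i)
    · simpa [boolSign] using le_abs_self (x i)

section pairSum

variable {ι : Type*} [Fintype ι] [LinearOrder ι]

theorem pairSum_add_pairSum_of_symm {f : ι → ι → ℝ} (hsymm : ∀ j j', f j j' = f j' j)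
    (hdiag : ∀ j, f j j = 0) : pairSum f + pairSum f = ∑ j, ∑ j', f j j' := by
  unfold pairSum
  nth_rewrite 2 [sum_comm]
  simp only [← sum_add_distrib]
  refine sum_congr rfl fun j _ => sum_congr rfl fun j' _ => ?_
  rcases lt_trichotomy j j' with h | rfl | h
  · simp [h, not_lt_of_gt h]
  · simp [hdiag]
  · simp [h, not_lt_of_gt h, hsymm j j']

theorem pairSum_abs_sub_comp_perm (t : ι → ℝ) (σ : Perm ι) :
    pairSum (fun j j' => |t (σ j) - t (σ j')|) = pairSum fun j j' => |t j - t j'| := by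
  have hσ := pairSum_add_pairSum_of_symm (f := fun j j' => |t (σ j) - t (σ j')|)
    (fun _ _ => abs_sub_comm _ _) (fun _ => by simp)
  have hid := pairSum_add_pairSum_of_symm (f := fun j j' => |t j - t j'|)
    (fun _ _ => abs_sub_comm _ _) (fun _ => by simp)
  have hsum : ∑ j, ∑ j', |t (σ j) - t (σ j')| = ∑ j, ∑ j', |t j - t j'| :=
    (Equiv.sum_comp σ fun j => ∑ j', |t j - t (σ j')|).trans
      (sum_congr rfl fun j _ => Equiv.sum_comp σ fun j' => |t j - t j'|)
  linarith

theorem pairSum_abs_boolSign_mul_sub {r : ι → ℝ} (hr0 : ∀ j, 0 ≤ r j) (hr : Monotone r)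
    (ρ : ι → Bool) :
    pairSum (fun j j' => |boolSign (ρ j) * r j - boolSign (ρ j') * r j'|) =
      pairSum (fun _ j' => r j') - pairSum fun j j' => boolSign (ρ j) * boolSign (ρ j') * r j := by
  unfold pairSum
  simp only [← sum_sub_distrib]
  refine sum_congr rfl fun j _ => sum_congr rfl fun j' _ => ?_
  split_ifs with h
  · exact abs_boolSign_mul_sub_boolSign_mul _ _ (hr0 j) (hr h.le)
  · ring

end pairSum

section centeredIndex

variable {N : ℕ}

theorem sum_mul_centeredIndex (u : Fin N → ℝ) :
    ∑ m, u m * centeredIndex N m = pairSum fun m m' => u m' - u m := by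
  have hlt : ∀ m' : Fin N, ∑ m, (if m < m' then u m' else 0) = (m' : ℕ) * u m' := fun m' => by
    rw [← sum_filter, filter_gt_eq_Iio, sum_const, Fin.card_Iio, nsmul_eq_mul]
  have hgt : ∀ m : Fin N, ∑ m', (if m < m' then u m else 0) = ((N - 1 - m : ℕ) : ℝ) * u m :=
    fun m => by rw [← sum_filter, filter_lt_eq_Ioi, sum_const, Fin.card_Ioi, nsmul_eq_mul]
  have hsplit : (pairSum fun m m' => u m' - u m) =
      ∑ m, ∑ m', (if m < m' then u m' else 0) - ∑ m, ∑ m', (if m < m' then u m else 0) := by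
    unfold pairSum
    simp only [← sum_sub_distrib]
    refine sum_congr rfl fun m _ => sum_congr rfl fun m' _ => ?_
    split_ifs <;> ring
  rw [hsplit, sum_comm (f := fun m m' => if m < m' then u m' else 0), sum_congr rfl fun m _ => hlt m,
    sum_congr rfl fun m _ => hgt m, ← sum_sub_distrib]
  refine sum_congr rfl fun m _ => ?_
  rw [Nat.sub_sub, Nat.cast_sub (by omega), centeredIndex]
  push_cast
  ring

theorem sum_mul_centeredIndex_comp_perm (t : Fin N → ℝ) (π : Perm (Fin N)) :
    ∑ j, t j * centeredIndex N (π j) = pairSum fun m m' => t (π.symm m') - t (π.symm m) := by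
  rw [← sum_mul_centeredIndex, ← Equiv.sum_comp π fun m => t (π.symm m) * centeredIndex N m]
  simp only [symm_apply_apply]

theorem sup'_sum_mul_centeredIndex_comp_perm (t : Fin N → ℝ) :
    univ.sup' univ_nonempty (fun π : Perm (Fin N) => ∑ j, t j * centeredIndex N (π j)) =
      pairSum fun j j' => |t j - t j'| := by
  refine le_antisymm (sup'_le _ _ fun π _ => ?_) ?_
  · rw [sum_mul_centeredIndex_comp_perm, ← pairSum_abs_sub_comp_perm t π.symm]
    refine sum_le_sum fun m _ => sum_le_sum fun m' _ => ?_
    split_ifs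
    · exact (le_abs_self _).trans_eq (abs_sub_comm _ _)
    · exact le_rfl
  · refine le_sup'_of_le _ (mem_univ (Tuple.sort t).symm) (le_of_eq ?_)
    rw [sum_mul_centeredIndex_comp_perm, ← pairSum_abs_sub_comp_perm t (Tuple.sort t)]
    refine sum_congr rfl fun m _ => sum_congr rfl fun m' _ => ?_
    split_ifs with h
    · dsimp only
      rw [symm_symm, abs_sub_comm]
      exact abs_of_nonneg (sub_nonneg.2 (Tuple.monotone_sort t h.le))
    · rfl

end centeredIndex

theorem uperm_formula_general (N : ℕ) (r y : Fin N → ℝ)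
    (hr0 : ∀ j, 0 ≤ r j) (hrmono : Monotone r) :
    uperm N (fun j m => |y j + (2 * ((m : ℕ) : ℝ) - (N : ℝ) + 1) * r j|) =
      (Finset.univ.sup' Finset.univ_nonempty fun ρ : Fin N → Bool =>
        (∑ j, (if ρ j then (1 : ℝ) else -1) * y j) -
          ∑ j, ∑ j', if j < j' then
            (if ρ j then (1 : ℝ) else -1) * (if ρ j' then (1 : ℝ) else -1) * r j else 0) +
      ∑ j : Fin N, ∑ j' : Fin N, (if j < j' then r j' else 0) := by
  show univ.sup' univ_nonempty (fun π : Perm (Fin N) => ∑ j, |y j + centeredIndex N (π j) * r j|) =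
    univ.sup' univ_nonempty (fun ρ : Fin N → Bool => ∑ j, boolSign (ρ j) * y j -
      pairSum fun j j' => boolSign (ρ j) * boolSign (ρ j') * r j) + pairSum fun _ j' => r j'
  simp_rw [sum_abs_eq_sup'_boolSign]
  rw [Finset.sup'_comm, sup'_add]
  refine sup'_congr _ rfl fun ρ _ => ?_
  have hsplit : ∀ π : Perm (Fin N), ∑ j, boolSign (ρ j) * (y j + centeredIndex N (π j) * r j) =
      ∑ j, boolSign (ρ j) * y j + ∑ j, boolSign (ρ j) * r j * centeredIndex N (π j) := fun π => by
    rw [← sum_add_distrib]; exact sum_congr rfl fun j _ => by ring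
  simp_rw [hsplit, ← add_sup', sup'_sum_mul_centeredIndex_comp_perm,
    pairSum_abs_boolSign_mul_sub hr0 hrmono]
  ring

theorem uperm_formula (N : ℕ) (hN : 1 ≤ N) (r y : Fin N → ℝ)
    (hr0 : ∀ j, 0 ≤ r j) (hrmono : Monotone r) :
    uperm N (fun j m => |y j + (2 * ((m : ℕ) : ℝ) - (N : ℝ) + 1) * r j|) =
      (Finset.univ.sup' Finset.univ_nonempty fun ρ : Fin N → Bool =>
        (∑ j, (if ρ j then (1 : ℝ) else -1) * y j) -
          ∑ j, ∑ j', if j < j' then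
            (if ρ j then (1 : ℝ) else -1) * (if ρ j' then (1 : ℝ) else -1) * r j else 0) +
      ∑ j : Fin N, ∑ j' : Fin N, (if j < j' then r j' else 0) :=
  uperm_formula_general N r y hr0 hrmono
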